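/- Identification of the noise variance from the marginal covariance. Let R < d be positive integers, let V and W be d × R real matrices, let Σ_f and Σ_g be R × R symmetric positive semidefinite matrices, and let σ₁², σ₂² be real numbers. If V Σ_f Vᵀ + σ₁² I_d = W Σ_g Wᵀ + σ₂² I_d, then σ₁² = σ₂² and V Σ_f Vᵀ = W Σ_g Wᵀ. -/
import Mathlib

open Matrix

lemma aux_not_eq (d R : ℕ) (hRd : R < d)
    (V : Matrix (Fin d) (Fin R) ℝ) (Sf : Matrix (Fin R) (Fin R) ℝ)
    (hSf : Sf.PosSemidef) (B : Matrix (Fin d) (Fin d) ℝ) (hB : B.PosSemidef)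
    (c : ℝ) (hc : 0 < c) : V * Sf * Vᵀ ≠ B + c • 1 := by
  intro h
  have hpd : (B + c • (1 : Matrix (Fin d) (Fin d) ℝ)).PosDef := by
    apply Matrix.PosDef.posSemidef_add hB
    have : c • (1 : Matrix (Fin d) (Fin d) ℝ) = diagonal (fun _ => c) := by
      ext i j; by_cases hij : i = j <;> simp [Matrix.one_apply, Matrix.diagonal_apply, hij]
    rw [this]
    exact PosDef.diagonal (fun _ => hc)
  have hrank : (B + c • (1 : Matrix (Fin d) (Fin d) ℝ)).rank = d := by
    simpa using rank_of_isUnit _ hpd.isUnit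
  have hle : (V * Sf * Vᵀ).rank ≤ R := by
    calc (V * Sf * Vᵀ).rank ≤ (V * Sf).rank := rank_mul_le_left _ _
    _ ≤ V.rank := rank_mul_le_left _ _
    _ ≤ R := by simpa using rank_le_card_width V
  rw [h, hrank] at hle
  omega

/-- Identification of the noise variance from the marginal covariance:
if `V Σf Vᵀ + σ₁² I = W Σg Wᵀ + σ₂² I` with `R < d` and `Σf, Σg` positive
semidefinite, then `σ₁² = σ₂²` and `V Σf Vᵀ = W Σg Wᵀ`. -/
theorem noise_variance_identified (d R : ℕ) (hR : 0 < R) (hRd : R < d)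
    (V W : Matrix (Fin d) (Fin R) ℝ)
    (Sf Sg : Matrix (Fin R) (Fin R) ℝ)
    (hSf : Sf.PosSemidef) (hSg : Sg.PosSemidef)
    (s1 s2 : ℝ)
    (h : V * Sf * Vᵀ + s1 • (1 : Matrix (Fin d) (Fin d) ℝ)
       = W * Sg * Wᵀ + s2 • 1) :
    s1 = s2 ∧ V * Sf * Vᵀ = W * Sg * Wᵀ := by
  have hWpsd : (W * Sg * Wᵀ).PosSemidef := by
    simpa using hSg.mul_mul_conjTranspose_same W
  have hVpsd : (V * Sf * Vᵀ).PosSemidef := by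
    simpa using hSf.mul_mul_conjTranspose_same V
  have hs : s1 = s2 := by
    by_contra hne
    rcases lt_or_gt_of_ne hne with hlt | hgt
    · -- s1 < s2 : V Sf Vᵀ = W Sg Wᵀ + (s2 - s1) • 1
      have heq : V * Sf * Vᵀ = W * Sg * Wᵀ + (s2 - s1) • 1 := by
        rw [sub_smul, eq_sub_of_add_eq h]; abel
      exact aux_not_eq d R hRd V Sf hSf _ hWpsd _ (by linarith) heq
    · have heq : W * Sg * Wᵀ = V * Sf * Vᵀ + (s1 - s2) • 1 := by
        rw [sub_smul, eq_sub_of_add_eq h.symm]; abel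
      exact aux_not_eq d R hRd W Sg hSg _ hVpsd _ (by linarith) heq
  refine ⟨hs, ?_⟩
  subst hs
  exact add_right_cancel h
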